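/- arXiv:2001.08351 — 5 statements merged into one kernel-verified Lean document; each statement's English description precedes it below -/
import Mathlib

section
/- For all integers n ≥ 0, c_{9,2}(3n+2) ≡ 0 (mod 27). -/
/-- The number of (k,j)-colored partitions of n: for each partition of n, each
part size with multiplicity m contributes a factor counting the ways to color
its parts with at most j of the k colors. -/
def ckj (k j n : ℕ) : ℕ :=
  ∑ P : n.Partition, ∏ s ∈ P.parts.toFinset,
    ∑ i ∈ Finset.Icc 1 j, Nat.choose k i * Nat.choose (P.parts.count s - 1) (i - 1)

/-!
A part size of multiplicity `m` can be coloured with at most two of nine colours in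
`9 + 36 (m - 1) = 9 (4m - 3)` ways, so every partition with two or more distinct part sizes
contributes a multiple of `81`. Modulo `81`, `c_{9,2}(N)` is therefore the sum over the
partitions of `N` into `d` equal parts, i.e. over the divisors `d` of `N`, of `9 (4d - 3)`,
and `4d - 3 ≡ d (mod 3)` leaves `9 σ(N)`. When `N ≡ 2 (mod 3)` the divisors pair off as
`d ↔ N / d` with `d · (N / d) ≡ 2`, which forces `d + N / d ≡ 0 (mod 3)`, so `3 ∣ σ(N)`.
-/

open Finset ArithmeticFunction
open scoped ArithmeticFunction.sigma

namespace Nat.Partition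

def replicateOfMemDivisors {N d : ℕ} (hd : d ∈ N.divisors) : N.Partition where
  parts := Multiset.replicate d (N / d)
  parts_pos hi := by
    rw [Multiset.eq_of_mem_replicate hi]
    exact Nat.div_pos (Nat.divisor_le hd) (Nat.pos_of_mem_divisors hd)
  parts_sum := by
    rw [Multiset.sum_replicate, smul_eq_mul, Nat.mul_div_cancel' (Nat.dvd_of_mem_divisors hd)]

lemma toFinset_parts_nonempty {N : ℕ} (hN : N ≠ 0) (P : N.Partition) :
    P.parts.toFinset.Nonempty := by
  rw [Multiset.toFinset_nonempty]
  rintro h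
  exact hN (by rw [← P.parts_sum, h, Multiset.sum_zero])

variable {N s : ℕ} {P : N.Partition}

lemma parts_eq_replicate_of_toFinset_eq_singleton (h : P.parts.toFinset = {s}) :
    P.parts = Multiset.replicate (Multiset.card P.parts) s :=
  Multiset.eq_replicate_card.2 fun _ hb => Finset.mem_singleton.1 (h ▸ Multiset.mem_toFinset.2 hb)

lemma card_parts_mul_eq_of_toFinset_eq_singleton (h : P.parts.toFinset = {s}) :
    Multiset.card P.parts * s = N := by
  conv_rhs => rw [← P.parts_sum, parts_eq_replicate_of_toFinset_eq_singleton h]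
  rw [Multiset.sum_replicate, smul_eq_mul]

lemma card_parts_mem_divisors_of_toFinset_eq_singleton (h : P.parts.toFinset = {s}) :
    Multiset.card P.parts ∈ N.divisors := by
  have hs : s ∈ P.parts := Multiset.mem_toFinset.1 (h ▸ Finset.mem_singleton_self s)
  have hcard : Multiset.card P.parts ≠ 0 := (Multiset.card_pos_iff_exists_mem.2 ⟨s, hs⟩).ne'
  refine Nat.mem_divisors.2 ⟨Dvd.intro s (card_parts_mul_eq_of_toFinset_eq_singleton h), ?_⟩
  rw [← card_parts_mul_eq_of_toFinset_eq_singleton h]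
  exact Nat.mul_ne_zero hcard (P.parts_pos hs).ne'

theorem sum_filter_card_toFinset_eq_one_prod_count {R : Type*} [CommSemiring R] (f : ℕ → R) :
    ∑ P : N.Partition with P.parts.toFinset.card = 1,
        ∏ s ∈ P.parts.toFinset, f (P.parts.count s) = ∑ d ∈ N.divisors, f d := by
  refine sum_bij' (fun P _ => Multiset.card P.parts) (fun d hd => replicateOfMemDivisors hd)
    ?_ ?_ ?_ ?_ ?_
  · intro P hP
    obtain ⟨s, hs⟩ := card_eq_one.1 (mem_filter.1 hP).2
    exact card_parts_mem_divisors_of_toFinset_eq_singleton hs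
  · intro d hd
    simp [replicateOfMemDivisors, Multiset.toFinset_replicate, (Nat.pos_of_mem_divisors hd).ne']
  · intro P hP
    obtain ⟨s, hs⟩ := card_eq_one.1 (mem_filter.1 hP).2
    have hcard := card_parts_mem_divisors_of_toFinset_eq_singleton hs
    ext1
    change Multiset.replicate _ (N / _) = _
    rw [Nat.div_eq_of_eq_mul_right (Nat.pos_of_mem_divisors hcard)
      (card_parts_mul_eq_of_toFinset_eq_singleton hs).symm]
    exact (parts_eq_replicate_of_toFinset_eq_singleton hs).symm
  · intro d _
    exact Multiset.card_replicate _ _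
  · intro P hP
    obtain ⟨s, hs⟩ := card_eq_one.1 (mem_filter.1 hP).2
    rw [hs, prod_singleton]
    conv_lhs => rw [parts_eq_replicate_of_toFinset_eq_singleton hs, Multiset.count_replicate_self]

theorem sum_prod_count_modEq_sum_divisors {a : ℕ} (hN : N ≠ 0) (f : ℕ → ℕ)
    (hf : ∀ m, a ∣ f m) :
    ∑ P : N.Partition, ∏ s ∈ P.parts.toFinset, f (P.parts.count s)
      ≡ ∑ d ∈ N.divisors, f d [MOD a ^ 2] := by
  rw [← sum_filter_add_sum_filter_not univ (fun P : N.Partition => P.parts.toFinset.card = 1),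
    sum_filter_card_toFinset_eq_one_prod_count]
  conv_rhs => rw [← add_zero (∑ d ∈ N.divisors, f d)]
  refine Nat.ModEq.add_left _ (Nat.ModEq.sum_zero fun P hP => Nat.modEq_zero_iff_dvd.2 ?_)
  have htwo : 2 ≤ P.parts.toFinset.card := by
    have := (toFinset_parts_nonempty hN P).card_pos
    have := (mem_filter.1 hP).2
    omega
  calc a ^ 2 ∣ a ^ P.parts.toFinset.card := pow_dvd_pow a htwo
    _ = ∏ _s ∈ P.parts.toFinset, a := (prod_const a).symm
    _ ∣ ∏ s ∈ P.parts.toFinset, f (P.parts.count s) :=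
      prod_dvd_prod_of_dvd _ _ fun _ _ => hf _

end Nat.Partition

theorem three_dvd_sigma_one_of_mod_three_eq_two {N : ℕ} (hN : N % 3 = 2) : 3 ∣ σ 1 N := by
  have hN0 : N ≠ 0 := by omega
  have hNmod : (N : ZMod 3) = 2 := by rw [← ZMod.natCast_mod, hN]; rfl
  have hmul (d : ℕ) (hd : d ∈ N.divisors) : (d : ZMod 3) * ((N / d : ℕ) : ZMod 3) = 2 := by
    rw [← Nat.cast_mul, Nat.mul_div_cancel' (Nat.dvd_of_mem_divisors hd), hNmod]
  have hsum_of_mul : ∀ x y : ZMod 3, x * y = 2 → x + y = 0 := by decide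
  have hnot_sq : ∀ x : ZMod 3, x * x ≠ 2 := by decide
  rw [sigma_one_apply, ← ZMod.natCast_eq_zero_iff, Nat.cast_sum]
  refine sum_involution (fun d _ => N / d) (fun d hd => hsum_of_mul _ _ (hmul d hd))
    (fun d hd _ hfix => hnot_sq d (by simpa only [hfix] using hmul d hd))
    (fun d hd => Nat.mem_divisors.2 ⟨Nat.div_dvd_of_dvd (Nat.dvd_of_mem_divisors hd), hN0⟩)
    (fun d hd => Nat.div_div_self (Nat.dvd_of_mem_divisors hd) hN0)

def colorings (k j m : ℕ) : ℕ :=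
  ∑ i ∈ Icc 1 j, k.choose i * (m - 1).choose (i - 1)

theorem ckj_eq_sum_prod_colorings (k j n : ℕ) :
    ckj k j n = ∑ P : n.Partition, ∏ s ∈ P.parts.toFinset, colorings k j (P.parts.count s) :=
  rfl

theorem colorings_two (k m : ℕ) : colorings k 2 m = k + k.choose 2 * (m - 1) := by
  simp [colorings, show Icc 1 2 = {1, 2} from rfl]

theorem c92_congruence (n : ℕ) : ckj 9 2 (3 * n + 2) ≡ 0 [MOD 27] := by
  have hfactor (m : ℕ) : colorings 9 2 m = 9 * (1 + 4 * (m - 1)) := by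
    rw [colorings_two, show Nat.choose 9 2 = 36 from rfl]
    ring
  have hmod81 := Nat.Partition.sum_prod_count_modEq_sum_divisors (N := 3 * n + 2) (a := 9)
    (by omega) (colorings 9 2) fun m => hfactor m ▸ dvd_mul_right 9 _
  have hsigma : 3 ∣ σ 1 (3 * n + 2) := three_dvd_sigma_one_of_mod_three_eq_two (by omega)
  have hsum : ∑ d ∈ (3 * n + 2).divisors, (1 + 4 * (d - 1)) ≡ 0 [MOD 3] := by
    refine .trans ?_ (Nat.modEq_zero_iff_dvd.2 hsigma)
    rw [sigma_one_apply]
    refine Nat.ModEq.sum fun d hd => ?_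
    have := Nat.pos_of_mem_divisors hd
    unfold Nat.ModEq
    omega
  rw [ckj_eq_sum_prod_colorings]
  calc _ ≡ ∑ d ∈ (3 * n + 2).divisors, colorings 9 2 d [MOD 27] := hmod81.of_dvd ⟨3, rfl⟩
    _ = 9 * ∑ d ∈ (3 * n + 2).divisors, (1 + 4 * (d - 1)) := by simp only [hfactor, mul_sum]
    _ ≡ 9 * 0 [MOD 9 * 3] := hsum.mul_left' 9
end

section
/- For all integers n ≥ 0, c_{9,5}(3n+2) ≡ 0 (mod 27). -/
def colorWeight (k j m : ℕ) : ℕ :=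
  ∑ i ∈ Finset.Icc 1 j, k.choose i * (m - 1).choose (i - 1)

theorem ckj_eq_sum_prod_colorWeight (k j n : ℕ) :
    ckj k j n = ∑ P : n.Partition, ∏ s ∈ P.parts.toFinset, colorWeight k j (P.parts.count s) :=
  rfl

theorem colorWeight_nine_five_succ (m : ℕ) :
    colorWeight 9 5 (m + 1) =
      9 + 36 * m + 84 * m.choose 2 + 126 * m.choose 3 + 126 * m.choose 4 := by
  simp [colorWeight, Finset.sum_Icc_succ_top, Nat.choose]

theorem colorWeight_nine_five_add_three (m : ℕ) :
    colorWeight 9 5 (m + 4) =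
      colorWeight 9 5 (m + 1) + 27 * (18 + 28 * m + 28 * m.choose 2 + 14 * m.choose 3) := by
  simp only [colorWeight_nine_five_succ, show m + 3 = m + 1 + 1 + 1 by rfl,
    Nat.choose_succ_succ', Nat.choose_zero_right, zero_add, Nat.choose_one_right]
  ring

theorem colorWeight_nine_five_modEq_add_three (m : ℕ) :
    colorWeight 9 5 (m + 4) ≡ colorWeight 9 5 (m + 1) [MOD 27] := by
  rw [colorWeight_nine_five_add_three]
  exact Nat.add_mul_mod_self_left ..

theorem colorWeight_nine_five_mod {m : ℕ} (hm : 0 < m) :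
    colorWeight 9 5 m % 27 = if 3 ∣ m then 3 else 9 * (m % 3) := by
  induction m using Nat.strong_induction_on with
  | _ m ih =>
    obtain h | ⟨m, rfl⟩ : m ≤ 3 ∨ ∃ m', m = m' + 4 := by
      rcases le_or_gt m 3 with h | h
      · exact .inl h
      · exact .inr ⟨m - 4, by omega⟩
    · interval_cases m <;> decide
    · rw [colorWeight_nine_five_modEq_add_three, ih (m + 1) (by omega) (by omega)]
      simp only [show m + 4 = m + 1 + 3 by ring, Nat.dvd_add_self_right, Nat.add_mod_right]

theorem three_dvd_colorWeight_nine_five {m : ℕ} (hm : 0 < m) : 3 ∣ colorWeight 9 5 m := by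
  have h := colorWeight_nine_five_mod hm
  split_ifs at h <;> omega

theorem nine_dvd_colorWeight_nine_five {m : ℕ} (hm : 0 < m) (h3 : ¬ 3 ∣ m) :
    9 ∣ colorWeight 9 5 m := by
  have h := colorWeight_nine_five_mod hm
  rw [if_neg h3] at h
  omega

theorem mod_three_add_div_mod_three {N d : ℕ} (hN : N % 3 = 2) (hd : d ∣ N) :
    d % 3 + N / d % 3 = 3 := by
  have hmod : d % 3 * (N / d % 3) % 3 = 2 := by rw [← Nat.mul_mod, Nat.mul_div_cancel' hd, hN]
  have : d % 3 < 3 := Nat.mod_lt _ three_pos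
  have : N / d % 3 < 3 := Nat.mod_lt _ three_pos
  interval_cases d % 3 <;> interval_cases N / d % 3 <;> simp_all

theorem dvd_colorWeight_nine_five_add_div {N d : ℕ} (hN : N % 3 = 2) (hd : d ∣ N) :
    27 ∣ colorWeight 9 5 d + colorWeight 9 5 (N / d) := by
  have hsum := mod_three_add_div_mod_three hN hd
  have hd0 : 0 < d := Nat.pos_of_dvd_of_pos hd (by omega)
  have h1 := colorWeight_nine_five_mod hd0
  have h2 := colorWeight_nine_five_mod (Nat.div_pos (Nat.le_of_dvd (by omega) hd) hd0)
  rw [if_neg (by omega)] at h1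
  rw [if_neg (by omega)] at h2
  omega

theorem dvd_sum_divisors_colorWeight_nine_five {N : ℕ} (hN : N % 3 = 2) :
    27 ∣ ∑ d ∈ N.divisors, colorWeight 9 5 d := by
  -- reindexing by `d ↦ N / d` and adding gives twice the sum
  have h2 : 27 ∣ 2 * ∑ d ∈ N.divisors, colorWeight 9 5 d := by
    rw [two_mul]
    nth_rw 2 [← Nat.sum_div_divisors]
    rw [← Finset.sum_add_distrib]
    exact Finset.dvd_sum fun d hd => dvd_colorWeight_nine_five_add_div hN (Nat.dvd_of_mem_divisors hd)
  exact Nat.Coprime.dvd_of_dvd_mul_left (by norm_num) h2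

namespace Nat.Partition

variable {n : ℕ}

theorem exists_not_dvd_count {d : ℕ} (P : n.Partition) (hn : ¬ d ∣ n) :
    ∃ s ∈ P.parts.toFinset, ¬ d ∣ P.parts.count s := by
  contrapose! hn
  rw [← P.parts_sum, Finset.sum_multiset_count]
  exact Finset.dvd_sum fun s hs => (hn s hs).mul_right s

def replicate {d : ℕ} (hd : d ∈ n.divisors) : n.Partition where
  parts := Multiset.replicate d (n / d)
  parts_pos hi := by
    rw [Multiset.eq_of_mem_replicate hi]
    exact Nat.div_pos (Nat.divisor_le hd) (Nat.pos_of_mem_divisors hd)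
  parts_sum := by
    rw [Multiset.sum_replicate, smul_eq_mul, Nat.mul_div_cancel' (Nat.dvd_of_mem_divisors hd)]

theorem parts_eq_replicate {P : n.Partition} {a : ℕ} (h : P.parts.toFinset = {a}) :
    P.parts = Multiset.replicate (Multiset.card P.parts) a :=
  Multiset.eq_replicate_card.2 fun b hb => by simpa [h] using Multiset.mem_toFinset.2 hb

theorem card_parts_mul {P : n.Partition} {a : ℕ} (h : P.parts.toFinset = {a}) :
    Multiset.card P.parts * a = n := by
  have hsum := P.parts_sum
  rwa [parts_eq_replicate h, Multiset.sum_replicate, smul_eq_mul] at hsum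

theorem card_parts_mem_divisors {P : n.Partition} {a : ℕ} (h : P.parts.toFinset = {a}) :
    Multiset.card P.parts ∈ n.divisors := by
  have ha : 0 < a := P.parts_pos (by simp [← Multiset.mem_toFinset, h])
  have hc : Multiset.card P.parts ≠ 0 := ((Multiset.toFinset_eq_singleton_iff _ _).1 h).1
  refine Nat.mem_divisors.2 ⟨Dvd.intro _ (card_parts_mul h), ?_⟩
  rw [← card_parts_mul h]
  positivity

theorem sum_prod_count_of_card_toFinset_eq_one {R : Type*} [CommSemiring R] (f : ℕ → R) :
    ∑ P : n.Partition with P.parts.toFinset.card = 1, ∏ s ∈ P.parts.toFinset, f (P.parts.count s) =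
      ∑ d ∈ n.divisors, f d := by
  refine Finset.sum_bij' (fun P _ => Multiset.card P.parts) (fun d hd => replicate hd)
    (fun P hP => ?_) (fun d hd => ?_) (fun P hP => ?_) (fun d hd => Multiset.card_replicate _ _)
    (fun P hP => ?_)
  · obtain ⟨a, ha⟩ := Finset.card_eq_one.1 (Finset.mem_filter.1 hP).2
    exact card_parts_mem_divisors ha
  · simp [replicate, Multiset.toFinset_replicate, (Nat.pos_of_mem_divisors hd).ne']
  · obtain ⟨a, ha⟩ := Finset.card_eq_one.1 (Finset.mem_filter.1 hP).2
    have hc : 0 < Multiset.card P.parts := Nat.pos_of_mem_divisors (card_parts_mem_divisors ha)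
    ext1
    change Multiset.replicate _ (n / _) = _
    rw [Nat.div_eq_of_eq_mul_right hc (card_parts_mul ha).symm]
    exact (parts_eq_replicate ha).symm
  · obtain ⟨a, ha⟩ := Finset.card_eq_one.1 (Finset.mem_filter.1 hP).2
    rw [ha, Finset.prod_singleton, Multiset.count_eq_card.2 fun b hb => ?_]
    exact (by simpa [ha] using Multiset.mem_toFinset.2 hb : b = a).symm

end Nat.Partition

theorem dvd_prod_colorWeight_nine_five {N : ℕ} (hN : ¬ 3 ∣ N) (P : N.Partition)
    (hP : P.parts.toFinset.card ≠ 1) :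
    27 ∣ ∏ s ∈ P.parts.toFinset, colorWeight 9 5 (P.parts.count s) := by
  obtain ⟨s, hs, hs3⟩ := P.exists_not_dvd_count hN
  obtain ⟨t, ht, hts⟩ :=
    Finset.exists_mem_ne (lt_of_le_of_ne (Finset.card_pos.2 ⟨s, hs⟩) (Ne.symm hP)) s
  have count_pos {u : ℕ} (hu : u ∈ P.parts.toFinset) : 0 < P.parts.count u :=
    Multiset.count_pos.2 (Multiset.mem_toFinset.1 hu)
  calc 27 = 9 * 3 := rfl
    _ ∣ colorWeight 9 5 (P.parts.count s) * colorWeight 9 5 (P.parts.count t) :=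
      mul_dvd_mul (nine_dvd_colorWeight_nine_five (count_pos hs) hs3)
        (three_dvd_colorWeight_nine_five (count_pos ht))
    _ = ∏ u ∈ {s, t}, colorWeight 9 5 (P.parts.count u) := by rw [Finset.prod_pair hts.symm]
    _ ∣ _ := Finset.prod_dvd_prod_of_subset _ _ _ (Finset.insert_subset hs (by simpa using ht))

theorem c95_congruence (n : ℕ) : ckj 9 5 (3 * n + 2) ≡ 0 [MOD 27] := by
  rw [Nat.modEq_zero_iff_dvd, ckj_eq_sum_prod_colorWeight,
    ← Finset.sum_filter_add_sum_filter_not _ fun P => P.parts.toFinset.card = 1]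
  refine dvd_add ?_ (Finset.dvd_sum fun P hP => ?_)
  · rw [Nat.Partition.sum_prod_count_of_card_toFinset_eq_one]
    exact dvd_sum_divisors_colorWeight_nine_five (by omega)
  · exact dvd_prod_colorWeight_nine_five (by omega) P (Finset.mem_filter.1 hP).2
end

section
/- For all integers n ≥ 0, c_{9,6}(9n+2) ≡ 0 (mod 27). -/
/-!
Write `c_{9,6}(N) = ∑_λ ∏_s F(m_s - 1)` with `F(t) = ∑_{i=1}^{6} C(9,i) C(t,i-1)`. Every `C(9,i)`
with `1 ≤ i ≤ 6` is divisible by 3, so `3 ∣ F(t)`; and `F` is 27-periodic modulo 27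
(Vandermonde), which reduces the remaining facts to finite checks: `9 ∣ F(t)` unless
`t ≡ 2 (mod 3)`, and `F(a-1) + F(b-1) ≡ 0 (mod 27)` whenever `ab ≡ 2 (mod 9)`.

Let `N ≡ 2 (mod 9)`. A partition of `N` with at least two distinct part sizes has a multiplicity
prime to 3 (otherwise `3 ∣ N`), so its term is divisible by `9 · 3`. The partitions into `d`
equal parts contribute `∑_{d ∣ N} F(d-1)`, and pairing `d` with `N/d` shows that twice this sum
vanishes mod 27.
-/

open Finset

def colorFactor (k j t : ℕ) : ℕ :=
  ∑ i ∈ Icc 1 j, k.choose i * t.choose (i - 1)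

theorem colorFactor_periodic {k j m q : ℕ}
    (h : ∀ i ∈ Icc 1 j, ∀ r ∈ Icc 1 (i - 1), q ∣ k.choose i * m.choose r) :
    Function.Periodic (fun t ↦ (colorFactor k j t : ZMod q)) m := by
  intro t
  simp only [colorFactor, Nat.cast_sum, Nat.cast_mul]
  refine sum_congr rfl fun i hi ↦ ?_
  rw [Nat.add_choose_eq, Nat.sum_antidiagonal_eq_sum_range_succ_mk, sum_range_succ,
    Nat.sub_self, Nat.choose_zero_right, mul_one, Nat.cast_add, mul_add, add_eq_right,
    Nat.cast_sum, mul_sum]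
  refine sum_eq_zero fun a ha ↦ ?_
  have hr : i - 1 - a ∈ Icc 1 (i - 1) := by simp only [mem_range, mem_Icc] at ha ⊢; omega
  rw [Nat.cast_mul, mul_left_comm, ← Nat.cast_mul, (ZMod.natCast_eq_zero_iff _ _).2 (h i hi _ hr),
    mul_zero]

theorem dvd_colorFactor {k j q : ℕ} (h : ∀ i ∈ Icc 1 j, q ∣ k.choose i) (t : ℕ) :
    q ∣ colorFactor k j t :=
  dvd_sum fun i hi ↦ (h i hi).mul_right _

namespace Nat.Partition

variable {N : ℕ}

theorem dvd_of_forall_dvd_count {d : ℕ} (P : N.Partition)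
    (h : ∀ s ∈ P.parts.toFinset, d ∣ P.parts.count s) : d ∣ N := by
  rw [← P.parts_sum, ← Multiset.map_id P.parts, sum_multiset_map_count]
  exact dvd_sum fun s hs ↦ (h s hs).mul_right _

theorem exists_parts_eq_replicate {P : N.Partition}
    (hP : P.parts.toFinset.card = 1) :
    ∃ a, Multiset.card P.parts * a = N ∧
      P.parts = Multiset.replicate (Multiset.card P.parts) a := by
  obtain ⟨-, a, ha⟩ := (Multiset.toFinset_card_eq_one_iff _).1 hP
  rw [Multiset.nsmul_singleton] at ha
  refine ⟨a, ?_, ha⟩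
  conv_rhs => rw [← P.parts_sum, ha]
  rw [Multiset.sum_replicate, smul_eq_mul]

theorem sum_filter_card_toFinset_eq_one {M : Type*} [AddCommMonoid M] (g : ℕ → M) :
    ∑ P ∈ univ.filter (fun P : N.Partition ↦ P.parts.toFinset.card = 1),
      g (Multiset.card P.parts) = ∑ d ∈ N.divisors, g d := by
  refine sum_bij (fun P _ ↦ Multiset.card P.parts) ?_ ?_ ?_ fun _ _ ↦ rfl
  · intro P hP
    have hP := (mem_filter.1 hP).2
    obtain ⟨a, ha, -⟩ := exists_parts_eq_replicate hP
    refine Nat.mem_divisors.2 ⟨⟨a, ha.symm⟩, ?_⟩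
    rintro rfl
    simp at hP
  · intro P₁ h₁ P₂ h₂ hcard
    have h₂ := (mem_filter.1 h₂).2
    obtain ⟨a₁, ha₁, hP₁⟩ := exists_parts_eq_replicate (mem_filter.1 h₁).2
    obtain ⟨a₂, ha₂, hP₂⟩ := exists_parts_eq_replicate h₂
    have hc : 0 < Multiset.card P₂.parts :=
      Nat.pos_of_ne_zero ((Multiset.toFinset_card_eq_one_iff _).1 h₂).1
    have ha : a₁ = a₂ := Nat.eq_of_mul_eq_mul_left hc (by rw [ha₂, ← hcard, ha₁])
    exact Partition.ext (by rw [hP₁, hP₂, hcard, ha])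
  · intro d hd
    obtain ⟨⟨a, rfl⟩, hN⟩ := Nat.mem_divisors.1 hd
    refine ⟨⟨Multiset.replicate d a, fun {i} hi ↦ ?_, ?_⟩, ?_, Multiset.card_replicate _ _⟩
    · rw [Multiset.eq_of_mem_replicate hi]
      exact Nat.pos_of_ne_zero (right_ne_zero_of_mul hN)
    · rw [Multiset.sum_replicate, smul_eq_mul]
    · rw [mem_filter, Multiset.toFinset_replicate, if_neg (left_ne_zero_of_mul hN)]
      exact ⟨mem_univ _, card_singleton _⟩

end Nat.Partition

theorem Nat.two_nsmul_sum_divisors {M : Type*} [AddCommMonoid M] (N : ℕ) (f : ℕ → M) :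
    2 • ∑ d ∈ N.divisors, f d = ∑ d ∈ N.divisors, (f d + f (N / d)) := by
  rw [two_nsmul, sum_add_distrib, Nat.sum_div_divisors]

theorem ckj_eq_sum_divisors_add_sum_filter (k j N : ℕ) :
    ckj k j N = ∑ d ∈ N.divisors, colorFactor k j (d - 1) +
      ∑ P ∈ univ.filter (fun P : N.Partition ↦ P.parts.toFinset.card ≠ 1),
        ∏ s ∈ P.parts.toFinset, colorFactor k j (P.parts.count s - 1) := by
  rw [ckj, ← sum_filter_add_sum_filter_not univ
      (fun P : N.Partition ↦ P.parts.toFinset.card = 1),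
    ← Nat.Partition.sum_filter_card_toFinset_eq_one]
  congr 1
  refine sum_congr rfl fun P hP ↦ ?_
  have hP := (mem_filter.1 hP).2
  obtain ⟨a, -, ha⟩ := Nat.Partition.exists_parts_eq_replicate hP
  rw [ha, Multiset.toFinset_replicate, if_neg ((Multiset.toFinset_card_eq_one_iff _).1 hP).1,
    prod_singleton, Multiset.count_replicate_self, Multiset.card_replicate]
  rfl

theorem colorFactor_modEq_mod (t : ℕ) :
    colorFactor 9 6 t ≡ colorFactor 9 6 (t % 27) [MOD 27] :=
  (ZMod.natCast_eq_natCast_iff _ _ _).1 ((colorFactor_periodic (by decide)).map_mod_nat t).symm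

theorem three_dvd_colorFactor (t : ℕ) : 3 ∣ colorFactor 9 6 t :=
  dvd_colorFactor (by decide) t

theorem nine_dvd_colorFactor {t : ℕ} (ht : ¬ 3 ∣ t + 1) : 9 ∣ colorFactor 9 6 t := by
  have hres : ∀ r < 27, ¬ 3 ∣ r + 1 → 9 ∣ colorFactor 9 6 r := by decide
  rw [(Nat.ModEq.of_dvd (by norm_num) (colorFactor_modEq_mod t)).dvd_iff (dvd_refl 9)]
  exact hres _ (Nat.mod_lt _ (by norm_num)) (by omega)

theorem colorFactor_add_colorFactor_modEq_zero {a b : ℕ} (hab : (a + 1) * (b + 1) % 9 = 2) :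
    colorFactor 9 6 a + colorFactor 9 6 b ≡ 0 [MOD 27] := by
  have hres : ∀ r < 27, ∀ s < 27, (r + 1) * (s + 1) % 9 = 2 →
      colorFactor 9 6 r + colorFactor 9 6 s ≡ 0 [MOD 27] := by decide
  refine ((colorFactor_modEq_mod a).add (colorFactor_modEq_mod b)).trans
    (hres _ (Nat.mod_lt _ (by norm_num)) _ (Nat.mod_lt _ (by norm_num)) ?_)
  have hmod (x : ℕ) : (x % 27 + 1) % 9 = (x + 1) % 9 := by omega
  rw [Nat.mul_mod, hmod, hmod, ← Nat.mul_mod, hab]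

theorem twentyseven_dvd_sum_divisors_colorFactor {N : ℕ} (hN : N % 9 = 2) :
    27 ∣ ∑ d ∈ N.divisors, colorFactor 9 6 (d - 1) := by
  refine Nat.Coprime.dvd_of_dvd_mul_left (by norm_num : Nat.Coprime 27 2) ?_
  rw [← smul_eq_mul, Nat.two_nsmul_sum_divisors]
  refine dvd_sum fun d hd ↦ Nat.modEq_zero_iff_dvd.1 (colorFactor_add_colorFactor_modEq_zero ?_)
  obtain ⟨hdN, hN0⟩ := Nat.mem_divisors.1 hd
  have hd : 0 < d := Nat.pos_of_dvd_of_pos hdN (Nat.pos_of_ne_zero hN0)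
  have hq : 0 < N / d := Nat.div_pos (Nat.le_of_dvd (Nat.pos_of_ne_zero hN0) hdN) hd
  rwa [Nat.sub_add_cancel hd, Nat.sub_add_cancel hq, Nat.mul_div_cancel' hdN]

theorem twentyseven_dvd_prod_colorFactor_of_card_toFinset_ne_one {N : ℕ} (hN : ¬ 3 ∣ N)
    (P : N.Partition) (hP : P.parts.toFinset.card ≠ 1) :
    27 ∣ ∏ s ∈ P.parts.toFinset, colorFactor 9 6 (P.parts.count s - 1) := by
  obtain ⟨s₀, hs₀, hcount⟩ : ∃ s ∈ P.parts.toFinset, ¬ 3 ∣ P.parts.count s := by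
    by_contra! h
    exact hN (P.dvd_of_forall_dvd_count h)
  have hcard : 1 < P.parts.toFinset.card := by
    have := card_pos.2 ⟨s₀, hs₀⟩
    omega
  obtain ⟨s₁, hs₁, hne⟩ := exists_mem_ne hcard s₀
  rw [← mul_prod_erase _ _ hs₀, show 27 = 9 * 3 from rfl]
  refine mul_dvd_mul (nine_dvd_colorFactor ?_)
    ((three_dvd_colorFactor _).trans (dvd_prod_of_mem _ (mem_erase.2 ⟨hne, hs₁⟩)))
  rwa [Nat.sub_add_cancel (Multiset.one_le_count_iff_mem.2 (Multiset.mem_toFinset.1 hs₀))]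

theorem c96_congruence (n : ℕ) : ckj 9 6 (9 * n + 2) ≡ 0 [MOD 27] := by
  rw [Nat.modEq_zero_iff_dvd, ckj_eq_sum_divisors_add_sum_filter]
  refine dvd_add (twentyseven_dvd_sum_divisors_colorFactor (by omega)) (dvd_sum fun P hP ↦ ?_)
  exact twentyseven_dvd_prod_colorFactor_of_card_toFinset_ne_one (by omega) P (mem_filter.1 hP).2
end

section
/- Let p be a prime and n ≥ 0 an integer. Then c_{2p,p}(pn) ≡ \bar{p}(n) (mod p), where \bar{p}(n) is the number of overpartitions of n. -/
/-- The number of overpartitions of n. -/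
def overp (n : ℕ) : ℕ := ∑ P : n.Partition, 2 ^ P.parts.toFinset.card

/-!
Modulo `p`, Lucas's theorem kills every term of the inner sum defining `c_{2p,p}` except
`i = p`, where `C(2p, p) * C(m - 1, p - 1) ≡ 2 * [p ∣ m]` for a part of multiplicity `m`. So a
partition of `p * n` contributes `2 ^ (number of distinct parts)` if all its multiplicities are
divisible by `p`, and `0` otherwise; dividing the multiplicities by `p` is a bijection from these
partitions onto the partitions of `n` that keeps the set of part sizes.
-/

open Finset

section Binomial

variable {p : ℕ} [Fact p.Prime]

lemma natCast_choose_mul_self (a : ℕ) : ((a * p).choose p : ZMod p) = a := by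
  have h := Choose.choose_mul_mul_modEq_choose_nat (p := p) (a := a) (b := 1)
  rw [← ZMod.natCast_eq_natCast_iff] at h
  simpa [mul_comm] using h

lemma natCast_choose_mul_of_lt (a : ℕ) {i : ℕ} (hi : 0 < i) (hip : i < p) :
    ((a * p).choose i : ZMod p) = 0 := by
  rw [(ZMod.natCast_eq_natCast_iff _ _ _).2 Choose.choose_modEq_choose_mod_mul_choose_div_nat]
  simp [Nat.mod_eq_of_lt hip, Nat.choose_eq_zero_of_lt hi]

lemma natCast_choose_sub_one_sub_one {m : ℕ} (hm : 0 < m) :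
    ((m - 1).choose (p - 1) : ZMod p) = if p ∣ m then 1 else 0 := by
  obtain ⟨k, rfl⟩ := Nat.exists_eq_add_one_of_ne_zero hm.ne'
  have hp : 0 < p := (Fact.out : p.Prime).pos
  have hr : k % p < p := Nat.mod_lt k hp
  have hdvd : p ∣ k + 1 ↔ k % p = p - 1 := by
    conv_lhs => rw [← Nat.div_add_mod k p, add_assoc, Nat.dvd_add_right (dvd_mul_right _ _)]
    refine ⟨fun h => ?_, fun h => by rw [h, Nat.sub_add_cancel hp]⟩
    have := Nat.le_of_dvd (Nat.succ_pos _) h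
    omega
  rw [Nat.add_sub_cancel,
    (ZMod.natCast_eq_natCast_iff _ _ _).2 Choose.choose_modEq_choose_mod_mul_choose_div_nat,
    Nat.mod_eq_of_lt (Nat.sub_lt hp one_pos), Nat.div_eq_of_lt (Nat.sub_lt hp one_pos)]
  by_cases h : k % p = p - 1
  · simp [h, hdvd]
  · simp [h, hdvd, Nat.choose_eq_zero_of_lt (show k % p < p - 1 by omega)]

lemma sum_natCast_choose_mul_choose_sub_one (a : ℕ) {m : ℕ} (hm : 0 < m) :
    ∑ i ∈ Icc 1 p, ((a * p).choose i : ZMod p) * ((m - 1).choose (i - 1) : ZMod p) =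
      if p ∣ m then (a : ZMod p) else 0 := by
  have hp : 1 ≤ p := (Fact.out : p.Prime).one_le
  rw [sum_eq_single_of_mem p (mem_Icc.2 ⟨hp, le_rfl⟩), natCast_choose_mul_self,
    natCast_choose_sub_one_sub_one hm, mul_ite, mul_one, mul_zero]
  intro i hi hip
  rw [mem_Icc] at hi
  rw [natCast_choose_mul_of_lt a (by omega) (by omega), zero_mul]

lemma prod_sum_natCast_choose_mul_choose_count {α : Type*} [DecidableEq α] (a : ℕ)
    (t : Multiset α) :
    ∏ s ∈ t.toFinset, ∑ i ∈ Icc 1 p,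
        ((a * p).choose i : ZMod p) * ((t.count s - 1).choose (i - 1) : ZMod p) =
      if ∀ s ∈ t.toFinset, p ∣ t.count s then (a : ZMod p) ^ t.toFinset.card else 0 := by
  rw [prod_congr rfl fun s hs => sum_natCast_choose_mul_choose_sub_one a
    (Multiset.count_pos.2 (Multiset.mem_toFinset.1 hs)), prod_ite_zero, prod_const]

end Binomial

lemma Multiset.exists_nsmul_eq_of_dvd_count {α : Type*} [DecidableEq α] {p : ℕ}
    {t : Multiset α} (h : ∀ a ∈ t, p ∣ t.count a) : ∃ u : Multiset α, p • u = t := by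
  refine ⟨Finsupp.toMultiset (t.toFinsupp.mapRange (· / p) (Nat.zero_div p)), ?_⟩
  ext a
  have hdvd : p ∣ t.count a := by
    by_cases ha : a ∈ t
    · exact h a ha
    · simp [count_eq_zero.2 ha]
  rw [count_nsmul, Finsupp.count_toMultiset, Finsupp.mapRange_apply, toFinsupp_apply,
    Nat.mul_div_cancel' hdvd]

namespace Nat.Partition

variable {n : ℕ}

def nsmul (p : ℕ) (Q : n.Partition) : (p * n).Partition where
  parts := p • Q.parts
  parts_pos hi := Q.parts_pos (Multiset.mem_of_mem_nsmul hi)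
  parts_sum := by rw [Multiset.sum_nsmul, Q.parts_sum, smul_eq_mul]

variable {p : ℕ}

@[simp]
lemma nsmul_parts (Q : n.Partition) : (Q.nsmul p).parts = p • Q.parts := rfl

lemma nsmul_injective (hp : p ≠ 0) : Function.Injective (nsmul p : n.Partition → _) :=
  fun _ _ h => Nat.Partition.ext (nsmul_right_injective hp (congrArg parts h))

lemma exists_nsmul_eq_iff (hp : p ≠ 0) (P : (p * n).Partition) :
    (∃ Q : n.Partition, Q.nsmul p = P) ↔ ∀ s ∈ P.parts.toFinset, p ∣ P.parts.count s := by
  constructor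
  · rintro ⟨Q, rfl⟩ s -
    simp
  · intro h
    obtain ⟨u, hu⟩ := Multiset.exists_nsmul_eq_of_dvd_count fun s hs =>
      h s (Multiset.mem_toFinset.2 hs)
    have hsum : p * u.sum = p * n := by rw [← smul_eq_mul, ← Multiset.sum_nsmul, hu, P.parts_sum]
    refine ⟨⟨u, fun hi => P.parts_pos ?_, Nat.eq_of_mul_eq_mul_left (Nat.pos_of_ne_zero hp) hsum⟩,
      Nat.Partition.ext hu⟩
    rw [← hu]
    exact Multiset.mem_nsmul.2 ⟨hp, hi⟩

lemma filter_dvd_count_eq_map_nsmul (hp : p ≠ 0) :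
    ({P : (p * n).Partition | ∀ s ∈ P.parts.toFinset, p ∣ P.parts.count s} : Finset _) =
      univ.map ⟨nsmul p, nsmul_injective hp⟩ := by
  ext P
  simp only [mem_filter, mem_univ, true_and, mem_map, Function.Embedding.coeFn_mk,
    exists_nsmul_eq_iff hp]

end Nat.Partition

theorem c2pp_dvd (p : ℕ) (hp : p.Prime) (n : ℕ) :
    ckj (2 * p) p (p * n) ≡ overp n [MOD p] := by
  have := Fact.mk hp
  rw [← ZMod.natCast_eq_natCast_iff, ckj, overp]
  push_cast
  simp_rw [prod_sum_natCast_choose_mul_choose_count]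
  rw [← sum_filter, Nat.Partition.filter_dvd_count_eq_map_nsmul hp.ne_zero, sum_map]
  simp [Multiset.toFinset_nsmul _ p hp.ne_zero]
end

section
/- For every integer n ≥ 0, c_{9,8}(n) = Σ_{t ∈ ℤ} (−1)^t c_{9,9}(n − 9·t(3t−1)/2), where the sum runs over all integers t with 9·t(3t−1)/2 ≤ n and c_{9,9}(n) = c_9(n) is the number of 9-colored partitions of n. (That is, the two functions are linked by the pentagonal-number recurrence magnified by 9, coming from C_{9,8}(q) = (q⁹;q⁹)_∞ · C_{9,9}(q).) -/
open PowerSeries PowerSeries.WithPiTopology Finset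

namespace PowerSeries.WithPiTopology

variable {R : Type*} [CommRing R] [TopologicalSpace R] (p : ℕ) (hp : p ≠ 0)

theorem continuous_expand : Continuous (expand p hp : R⟦X⟧ → R⟦X⟧) := by
  refine continuous_iff_continuousAt.2 fun φ => ?_
  rw [ContinuousAt, tendsto_iff_coeff_tendsto]
  intro d
  simp_rw [coeff_expand]
  split_ifs
  · exact (continuous_coeff R _).tendsto _
  · exact tendsto_const_nhds

theorem hasSum_expand (φ : R⟦X⟧) :
    HasSum (fun j => coeff j φ • (X : R⟦X⟧) ^ (p * j)) (expand p hp φ) := by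
  convert (hasSum_of_monomials_self φ).map (expand p hp) (continuous_expand p hp) using 1
  ext1 j
  rw [Function.comp_apply, expand_monomial]
  ext n
  simp [coeff_monomial, coeff_X_pow]

theorem one_add_tsum_eq_expand [IsTopologicalRing R] [T2Space R] {φ : R⟦X⟧}
    (hφ : constantCoeff φ = 1) :
    1 + ∑' j, coeff (j + 1) φ • (X : R⟦X⟧) ^ (p * (j + 1)) = expand p hp φ := by
  have h := (hasSum_nat_add_iff' 1).2 (hasSum_expand p hp φ)
  simp only [range_one, sum_singleton, coeff_zero_eq_constantCoeff, hφ, mul_zero, pow_zero,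
    one_smul] at h
  rw [h.tsum_eq]
  abel

end PowerSeries.WithPiTopology

theorem Nat.Partition.hasProd_expand_genFun {R : Type*} [CommRing R] [TopologicalSpace R]
    [IsTopologicalRing R] [T2Space R] {f : R⟦X⟧} (hf : constantCoeff f = 1) :
    HasProd (fun i => expand (i + 1) i.succ_ne_zero f) (genFun fun _ c => coeff c f) := by
  have h := hasProd_genFun (fun _ c => coeff c f)
  rwa [funext fun i => one_add_tsum_eq_expand (i + 1) i.succ_ne_zero hf] at h

theorem natAbs_le_pentagonal (t : ℤ) : t.natAbs ≤ pentagonal t := by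
  have h := two_mul_natCast_pentagonal t
  zify
  rcases le_or_gt 0 t with ht | ht
  · rw [abs_of_nonneg ht]; nlinarith
  · rw [abs_of_neg ht]; nlinarith

theorem coeff_expand_pentagonalSeries_mul {R : Type*} [CommRing R] {k : ℕ} (hk : k ≠ 0)
    (f : R⟦X⟧) (n : ℕ) :
    coeff n (expand k hk (pentagonalSeries R) * f) =
      ∑ t ∈ Icc (-(n : ℤ)) n,
        if k * pentagonal t ≤ n then (-1) ^ t.natAbs * coeff (n - k * pentagonal t) f else 0 := by
  let _ : TopologicalSpace R := ⊥
  have _ : DiscreteTopology R := ⟨rfl⟩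
  have hterm : ∀ t : ℤ,
      coeff n (expand k hk ((t.negOnePow : R⟦X⟧) * X ^ pentagonal t) * f) =
        if k * pentagonal t ≤ n then (-1) ^ t.natAbs * coeff (n - k * pentagonal t) f else 0 := by
    intro t
    rw [show ((t.negOnePow : ℤ) : R⟦X⟧) = C ((-1) ^ t.natAbs) by simp, map_mul (expand k hk),
      expand_C, map_pow (expand k hk), expand_X, ← pow_mul, mul_assoc, coeff_C_mul,
      coeff_X_pow_mul', mul_ite, mul_zero]
  have h := (((hasSum_pentagonalSeries R).map (expand k hk)
    (continuous_expand k hk)).mul_right f).map (coeff n) (continuous_coeff R n)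
  simp only [Function.comp_def, hterm] at h
  refine h.unique (hasSum_sum_of_ne_finset_zero fun t ht => if_neg fun hle => ht ?_)
  have := (natAbs_le_pentagonal t).trans (Nat.le_mul_of_pos_left _ (Nat.pos_of_ne_zero hk))
  rw [mem_Icc]
  omega

def coloredCount (k j c : ℕ) : ℕ := ∑ i ∈ Icc 1 j, k.choose i * (c - 1).choose (i - 1)

/-- The constant term is `1` (the empty coloring), not `coloredCount k j 0 = k`. -/
def coloredSeries (k j : ℕ) : ℤ⟦X⟧ := mk fun c => if c = 0 then 1 else coloredCount k j c

@[simp]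
theorem constantCoeff_coloredSeries (k j : ℕ) : constantCoeff (coloredSeries k j) = 1 := by
  simp [coloredSeries, ← coeff_zero_eq_constantCoeff_apply]

theorem ckj_eq_coeff_genFun (k j n : ℕ) :
    (ckj k j n : ℤ) = coeff n (Nat.Partition.genFun fun _ c => coeff c (coloredSeries k j)) := by
  rw [Nat.Partition.coeff_genFun, ckj, Nat.cast_sum]
  refine sum_congr rfl fun P _ => ?_
  rw [Finsupp.prod, Multiset.toFinsupp_support, Nat.cast_prod]
  refine prod_congr rfl fun s hs => ?_
  have : P.parts.count s ≠ 0 := Multiset.count_ne_zero.2 (Multiset.mem_toFinset.1 hs)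
  simp [coloredSeries, coloredCount, this]

theorem coloredCount_self {k : ℕ} (hk : 0 < k) (c : ℕ) :
    coloredCount k k c = coloredCount k (k - 1) c + (c - 1).choose (k - 1) := by
  obtain ⟨j, rfl⟩ : ∃ j, k = j + 1 := ⟨k - 1, by omega⟩
  rw [coloredCount, sum_Icc_succ_top (by omega), coloredCount, Nat.choose_self, one_mul,
    Nat.add_sub_cancel]

theorem choose_sub_one_eq_coloredCount {k c : ℕ} (hk : 0 < k) (hkc : k < c) :
    (c - 1).choose (k - 1) = coloredCount k k (c - k) := by
  obtain ⟨m, rfl⟩ : ∃ m, c = k + (m + 1) := ⟨c - k - 1, by omega⟩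
  rw [show k + (m + 1) - 1 = k + m by omega, Nat.add_choose_eq,
    Nat.sum_antidiagonal_eq_sum_range_succ_mk, coloredCount, show (k - 1).succ = k by omega]
  refine sum_nbij' (fun a => k - a) (fun i => k - i) ?_ ?_ ?_ ?_ ?_ <;>
    intro a ha <;> simp only [mem_range, mem_Icc] at ha
  any_goals first | omega | (simp only [mem_range, mem_Icc]; omega)
  rw [← Nat.choose_symm ha.le, show k + (m + 1) - k - 1 = m by omega,
    show k - a - 1 = k - 1 - a by omega]

theorem coloredSeries_pred {k : ℕ} (hk : 0 < k) :
    coloredSeries k (k - 1) = (1 - X ^ k) * coloredSeries k k := by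
  ext c
  rw [sub_mul, one_mul, map_sub, coeff_X_pow_mul']
  rcases Nat.eq_zero_or_pos c with rfl | hc
  · simp [coloredSeries, hk.ne']
  simp only [coloredSeries, coeff_mk, if_neg hc.ne']
  rw [coloredCount_self hk c, Nat.cast_add]
  rcases lt_trichotomy k c with hlt | rfl | hgt
  · rw [if_pos hlt.le, if_neg (by omega), choose_sub_one_eq_coloredCount hk hlt]
    ring
  · simp
  · rw [if_neg (by omega), Nat.choose_eq_zero_of_lt (by omega)]
    simp

theorem genFun_coloredSeries_pred {k : ℕ} (hk : 0 < k) :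
    Nat.Partition.genFun (fun _ c => coeff c (coloredSeries k (k - 1))) =
      expand k hk.ne' (pentagonalSeries ℤ) *
        Nat.Partition.genFun (fun _ c => coeff c (coloredSeries k k)) := by
  have hpent := (hasProd_one_sub_X_pow ℤ).map (expand k hk.ne') (continuous_expand k hk.ne')
  refine (Nat.Partition.hasProd_expand_genFun (constantCoeff_coloredSeries k (k - 1))).unique ?_
  convert hpent.mul (Nat.Partition.hasProd_expand_genFun (constantCoeff_coloredSeries k k))
    using 2 with i
  simp [coloredSeries_pred hk, ← pow_mul, mul_comm]

theorem ckj_pred_eq_sum {k : ℕ} (hk : 0 < k) (n : ℕ) :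
    (ckj k (k - 1) n : ℤ) = ∑ t ∈ Icc (-(n : ℤ)) n,
      if k * pentagonal t ≤ n then (-1) ^ t.natAbs * (ckj k k (n - k * pentagonal t) : ℤ)
      else 0 := by
  simp_rw [ckj_eq_coeff_genFun, genFun_coloredSeries_pred hk,
    coeff_expand_pentagonalSeries_mul hk.ne']

/-- The pentagonal-number recurrence, magnified by 9, linking `c₉,₈` and `c₉,₉`:
`c₉,₈(n) = Σ_{t ∈ ℤ} (-1)^t c₉,₉(n - 9·t(3t-1)/2)`, the sum running over all integers
`t` with `9·t(3t-1)/2 ≤ n` (all such `t` satisfy `|t| ≤ n`). -/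
theorem c98_pentagonal_recurrence (n : ℕ) :
    (ckj 9 8 n : ℤ) =
      ∑ t ∈ Finset.Icc (-(n : ℤ)) (n : ℤ),
        if 9 * (t * (3 * t - 1) / 2) ≤ (n : ℤ) then
          (-1) ^ t.natAbs * (ckj 9 9 ((n : ℤ) - 9 * (t * (3 * t - 1) / 2)).toNat : ℤ)
        else 0 := by
  rw [show 8 = 9 - 1 from rfl, ckj_pred_eq_sum (by norm_num)]
  refine sum_congr rfl fun t _ => ?_
  rw [← natCast_pentagonal]
  split_ifs
  · rw [show ((n : ℤ) - 9 * pentagonal t).toNat = n - 9 * pentagonal t by omega]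
  all_goals omega
end
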